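/- arXiv:1504.02513 — 4 statements merged into one kernel-verified Lean document; each statement's English description precedes it below -/
import Mathlib

section
/- For every d ≥ 1, the number of permutations of {1,...,d+1} that contain an increasing subsequence of length d equals d^2 + 1. -/
/-- `σ` has an increasing subsequence of length `k`. -/
def ContainsInc (n k : ℕ) (σ : Equiv.Perm (Fin n)) : Prop :=
  ∃ s : Fin k → Fin n, StrictMono s ∧ StrictMono (fun i => σ (s i))

/-- `B d n`: number of permutations of length `n` containing an increasing
subsequence of length `d`. -/
noncomputable def B (d n : ℕ) : ℕ := Nat.card {σ : Equiv.Perm (Fin n) // ContainsInc n d σ}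

/-- `G d n`: number of permutations of length `n` avoiding an increasing
subsequence of length `d`. -/
noncomputable def G (d n : ℕ) : ℕ := Nat.card {σ : Equiv.Perm (Fin n) // ¬ ContainsInc n d σ}


open Fin

variable {d : ℕ}

/-- The "interval cycle" permutation sending `p` to `v`. -/
def E (p v : Fin (d+1)) : Equiv.Perm (Fin (d+1)) := (finSuccEquiv' p).trans (finSuccEquiv' v).symm

lemma E_self (p v : Fin (d+1)) : E p v p = v := by
  simp [E]

lemma E_succAbove (p v : Fin (d+1)) (i : Fin d) : E p v (p.succAbove i) = v.succAbove i := by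
  simp [E]

lemma E_symm (p v : Fin (d+1)) : (E p v).symm = E v p := by
  ext x
  simp [E]

lemma E_diag (p : Fin (d+1)) : E p p = 1 := by
  simp [E]
  rfl

lemma E_val (p v x : Fin (d+1)) (hx : x ≠ p) :
    ((E p v) x).val = if x.val < p.val then (if x.val < v.val then x.val else x.val + 1)
      else (if x.val - 1 < v.val then x.val - 1 else x.val) := by
  rcases lt_or_gt_of_ne hx with h | h
  · have hlast : x ≠ last d := by
      intro hl; subst hl; exact absurd h (by simp [Fin.lt_def, Fin.le_def]; omega)
    have hxl : x.val < d := by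
      have := p.isLt; have := Fin.lt_def.mp h; omega
    obtain ⟨i, hival, hsc⟩ : ∃ i : Fin d, i.val = x.val ∧ Fin.castSucc i = x :=
      ⟨⟨x.val, hxl⟩, rfl, Fin.ext rfl⟩
    have hsa : p.succAbove i = x := by
      rw [Fin.succAbove_of_castSucc_lt _ _ (by rw [hsc]; exact h)]
      exact hsc
    have := E_succAbove p v i
    rw [hsa] at this
    rw [this]
    rw [if_pos (Fin.lt_def.mp h)]
    rcases lt_or_ge (Fin.castSucc i) v with h2 | h2
    · have h2' : x.val < v.val := by have := Fin.lt_def.mp h2; simpa [hival] using this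
      rw [Fin.succAbove_of_castSucc_lt _ _ h2, if_pos h2']
      simpa using hival
    · have h2' : v.val ≤ x.val := by have := Fin.le_def.mp h2; simpa [hival] using this
      rw [Fin.succAbove_of_le_castSucc _ _ h2, if_neg (by omega)]
      simpa using hival
  · have hx0 : x ≠ 0 := by
      intro h0; subst h0; exact absurd h (by simp [Fin.lt_def])
    have hplt : p.val < x.val := Fin.lt_def.mp h
    have hxval : x.val ≠ 0 := by omega
    obtain ⟨i, hival, hsuc⟩ : ∃ i : Fin d, i.val = x.val - 1 ∧ Fin.succ i = x :=
      ⟨⟨x.val - 1, by have := x.isLt; omega⟩, rfl, Fin.ext (by simp; omega)⟩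
    have hsa : p.succAbove i = x := by
      rw [Fin.succAbove_of_le_castSucc _ _ (by rw [Fin.le_def]; simpa [hival] using by omega)]
      exact hsuc
    have := E_succAbove p v i
    rw [hsa] at this
    rw [this, if_neg (by omega)]
    rcases lt_or_ge (Fin.castSucc i) v with h2 | h2
    · have h2' : x.val - 1 < v.val := by have := Fin.lt_def.mp h2; simpa [hival] using this
      rw [Fin.succAbove_of_castSucc_lt _ _ h2, if_pos h2']
      simpa using hival
    · have h2' : v.val ≤ x.val - 1 := by have := Fin.le_def.mp h2; simpa [hival] using this
      rw [Fin.succAbove_of_le_castSucc _ _ h2, if_neg (by omega)]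
      simp [hival]
      omega

lemma exists_succAbove_eq_fun {d : ℕ} (f : Fin d → Fin (d+1)) (hf : StrictMono f) :
    ∃ p : Fin (d+1), f = p.succAbove := by
  have hinj := hf.injective
  have hns : ¬ Function.Surjective f := by
    intro hs
    have := Fintype.card_le_of_surjective f hs
    simp at this
  have hex : ∃ p, p ∉ Set.range f := by
    by_contra h
    push_neg at h
    exact hns fun y => h y
  obtain ⟨p, hp⟩ := hex
  have hsub : Set.range f ⊆ {p}ᶜ := by
    rintro y ⟨x, rfl⟩ hy
    exact hp ⟨x, by simpa using hy⟩
  have hcard1 : (Set.range f).ncard = d := by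
    rw [← Nat.card_coe_set_eq, Nat.card_range_of_injective hinj,
      Nat.card_eq_fintype_card, Fintype.card_fin]
  have hcard2 : ({p}ᶜ : Set (Fin (d+1))).ncard = d := by
    have h := Set.ncard_add_ncard_compl ({p} : Set (Fin (d+1)))
    simp only [Set.ncard_singleton, Set.ncard_univ, Nat.card_eq_fintype_card,
      Fintype.card_fin] at h
    omega
  have heq : Set.range f = {p}ᶜ :=
    Set.eq_of_subset_of_ncard_le hsub (by rw [hcard2, hcard1]) (Set.toFinite _)
  haveI : WellFoundedLT (Fin d) := inferInstance
  exact ⟨p, (hf.range_inj (Fin.strictMono_succAbove p)).mp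
    (by rw [heq, Fin.range_succAbove])⟩

lemma containsInc_iff {d : ℕ} (σ : Equiv.Perm (Fin (d+1))) :
    ContainsInc (d+1) d σ ↔ ∃ p v, σ = E p v := by
  constructor
  · rintro ⟨s, hs, hσs⟩
    obtain ⟨p, rfl⟩ := exists_succAbove_eq_fun s hs
    obtain ⟨v, hv⟩ := exists_succAbove_eq_fun _ hσs
    refine ⟨p, v, Equiv.ext fun x => ?_⟩
    rcases eq_or_ne x p with rfl | hx
    · rw [E_self]
      by_contra hne
      have hmem : σ x ∈ Set.range v.succAbove := by
        rw [Fin.range_succAbove]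
        simp only [Set.mem_compl_iff, Set.mem_singleton_iff]
        exact hne
      obtain ⟨i, hi⟩ := hmem
      have h2 : σ (x.succAbove i) = σ x := (congrFun hv i).trans hi
      exact Fin.succAbove_ne x i (σ.injective h2)
    · obtain ⟨i, rfl⟩ := Fin.exists_succAbove_eq hx
      rw [E_succAbove]
      exact congrFun hv i
  · rintro ⟨p, v, rfl⟩
    refine ⟨p.succAbove, Fin.strictMono_succAbove p, ?_⟩
    have h : (fun i => (E p v) (p.succAbove i)) = v.succAbove := funext fun i => E_succAbove p v i
    rw [h]
    exact Fin.strictMono_succAbove v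

lemma eq_of_lt_apply {d : ℕ} {p v x : Fin (d+1)} (hpv : p.val ≤ v.val)
    (h : x.val < ((E p v) x).val) : x = p := by
  by_contra hx
  rw [E_val p v x hx] at h
  split_ifs at h <;> omega

lemma inj_lt {d : ℕ} {p v p' v' : Fin (d+1)} (h1 : p.val < v.val) (h2 : p'.val < v'.val)
    (he : E p v = E p' v') : p = p' ∧ v = v' := by
  have hp : p' = p := eq_of_lt_apply h1.le (by rw [he, E_self]; exact h2)
  refine ⟨hp.symm, ?_⟩
  calc v = E p v p := (E_self p v).symm
    _ = (E p' v') p := by rw [he]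
    _ = v' := by rw [← hp]; exact E_self p' v'

lemma mixed_ne {d : ℕ} {p v p' v' : Fin (d+1)} (h1 : p.val < v.val)
    (h2 : v'.val + 2 ≤ p'.val) : E p v ≠ E p' v' := by
  intro he
  have hp' := p'.isLt
  have hv'p' : v' ≠ p' := fun h => by rw [h] at h2; omega
  have ha : ((E p' v') v').val = v'.val + 1 := by
    rw [E_val _ _ _ hv'p']
    split_ifs <;> omega
  have hvp : v' = p := eq_of_lt_apply h1.le (by rw [he]; omega)
  set x₂ : Fin (d+1) := ⟨v'.val + 1, by omega⟩ with hx₂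
  have hx₂v : x₂.val = v'.val + 1 := rfl
  have hx₂p' : x₂ ≠ p' := fun h => by rw [← h, hx₂v] at h2; omega
  have ha2 : ((E p' v') x₂).val = v'.val + 2 := by
    rw [E_val _ _ _ hx₂p', hx₂v]
    split_ifs <;> omega
  have hx₂p : x₂ = p := eq_of_lt_apply h1.le (by rw [he]; omega)
  have e1 : x₂.val = p.val := congrArg Fin.val hx₂p
  have e2 : v'.val = p.val := congrArg Fin.val hvp
  omega

lemma adjacent_swap {d : ℕ} {p v : Fin (d+1)} (h : v.val + 1 = p.val) : E p v = E v p := by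
  have hne : p ≠ v := fun h' => by rw [h'] at h; omega
  have hne' : v ≠ p := hne.symm
  apply Equiv.ext; intro x
  apply Fin.ext
  have hp := p.isLt
  rcases eq_or_ne x p with rfl | hxp
  · rw [E_self, E_val _ _ _ hne]
    split_ifs <;> omega
  · rcases eq_or_ne x v with rfl | hxv
    · rw [E_self, E_val _ _ _ hne']
      split_ifs <;> omega
    · have hxp' : x.val ≠ p.val := fun hh => hxp (Fin.ext hh)
      have hxv' : x.val ≠ v.val := fun hh => hxv (Fin.ext hh)
      rw [E_val _ _ _ hxp, E_val _ _ _ hxv]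
      split_ifs <;> omega

lemma E_ne_one {d : ℕ} {p v : Fin (d+1)} (h : p.val ≠ v.val) : E p v ≠ 1 := by
  intro he
  have h2 := E_self p v
  rw [he] at h2
  simp at h2
  exact h (congrArg Fin.val h2)

/-- Explicit encoding of the permutations containing an increasing subsequence. -/
def enc (d : ℕ) : Fin d × Fin d ⊕ Unit → Equiv.Perm (Fin (d+1))
  | .inr _ => 1
  | .inl (x, y) => if x ≤ y then E x.castSucc y.succ else E x.succ y.castSucc

lemma enc_inl_of_le {d : ℕ} {x y : Fin d} (h : x ≤ y) :
    enc d (Sum.inl (x, y)) = E x.castSucc y.succ := by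
  simp only [enc]
  rw [if_pos h]

lemma enc_inl_of_not_le {d : ℕ} {x y : Fin d} (h : ¬ x ≤ y) :
    enc d (Sum.inl (x, y)) = E x.succ y.castSucc := by
  simp only [enc]
  rw [if_neg h]

lemma enc_inr {d : ℕ} (u : Unit) : enc d (Sum.inr u) = 1 := rfl

lemma enc_exists (d : ℕ) (a : Fin d × Fin d ⊕ Unit) : ∃ p v, enc d a = E p v := by
  rcases a with ⟨x, y⟩ | u
  · by_cases h : x ≤ y
    · exact ⟨_, _, enc_inl_of_le h⟩
    · exact ⟨_, _, enc_inl_of_not_le h⟩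
  · exact ⟨0, 0, (E_diag 0).symm⟩

lemma enc_inj (d : ℕ) : Function.Injective (enc d) := by
  rintro (⟨x₁, y₁⟩ | u₁) (⟨x₂, y₂⟩ | u₂) h
  · by_cases h1 : x₁ ≤ y₁ <;> by_cases h2 : x₂ ≤ y₂
    · rw [enc_inl_of_le h1, enc_inl_of_le h2] at h
      have h1' : x₁.val ≤ y₁.val := h1
      have h2' : x₂.val ≤ y₂.val := h2
      have c1 : (Fin.castSucc x₁).val < (Fin.succ y₁).val := by
        rw [Fin.coe_castSucc, Fin.val_succ]; omega
      have c2 : (Fin.castSucc x₂).val < (Fin.succ y₂).val := by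
        rw [Fin.coe_castSucc, Fin.val_succ]; omega
      obtain ⟨hp, hv⟩ := inj_lt c1 c2 h
      have hx : x₁ = x₂ := Fin.ext (by
        have := congrArg Fin.val hp
        rwa [Fin.coe_castSucc, Fin.coe_castSucc] at this)
      have hy : y₁ = y₂ := Fin.ext (by
        have := congrArg Fin.val hv
        rw [Fin.val_succ, Fin.val_succ] at this
        omega)
      rw [hx, hy]
    · rw [enc_inl_of_le h1, enc_inl_of_not_le h2] at h
      have h1' : x₁.val ≤ y₁.val := h1
      have h2' : y₂.val < x₂.val := not_le.mp h2
      have c1 : (Fin.castSucc x₁).val < (Fin.succ y₁).val := by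
        rw [Fin.coe_castSucc, Fin.val_succ]; omega
      have c2 : (Fin.castSucc y₂).val + 2 ≤ (Fin.succ x₂).val := by
        rw [Fin.coe_castSucc, Fin.val_succ]; omega
      exact absurd h (mixed_ne c1 c2)
    · rw [enc_inl_of_not_le h1, enc_inl_of_le h2] at h
      have h1' : y₁.val < x₁.val := not_le.mp h1
      have h2' : x₂.val ≤ y₂.val := h2
      have c1 : (Fin.castSucc x₂).val < (Fin.succ y₂).val := by
        rw [Fin.coe_castSucc, Fin.val_succ]; omega
      have c2 : (Fin.castSucc y₁).val + 2 ≤ (Fin.succ x₁).val := by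
        rw [Fin.coe_castSucc, Fin.val_succ]; omega
      exact absurd h.symm (mixed_ne c1 c2)
    · rw [enc_inl_of_not_le h1, enc_inl_of_not_le h2] at h
      have h1' : y₁.val < x₁.val := not_le.mp h1
      have h2' : y₂.val < x₂.val := not_le.mp h2
      have h' := congrArg Equiv.symm h
      rw [E_symm, E_symm] at h'
      have c1 : (Fin.castSucc y₁).val < (Fin.succ x₁).val := by
        rw [Fin.coe_castSucc, Fin.val_succ]; omega
      have c2 : (Fin.castSucc y₂).val < (Fin.succ x₂).val := by
        rw [Fin.coe_castSucc, Fin.val_succ]; omega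
      obtain ⟨hv, hp⟩ := inj_lt c1 c2 h'
      have hx : x₁ = x₂ := Fin.ext (by
        have := congrArg Fin.val hp
        rw [Fin.val_succ, Fin.val_succ] at this
        omega)
      have hy : y₁ = y₂ := Fin.ext (by
        have := congrArg Fin.val hv
        rwa [Fin.coe_castSucc, Fin.coe_castSucc] at this)
      rw [hx, hy]
  · exfalso
    rw [enc_inr] at h
    by_cases h1 : x₁ ≤ y₁
    · rw [enc_inl_of_le h1] at h
      exact E_ne_one (by rw [Fin.coe_castSucc, Fin.val_succ]; have : x₁.val ≤ y₁.val := h1; omega) h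
    · rw [enc_inl_of_not_le h1] at h
      exact E_ne_one (by rw [Fin.coe_castSucc, Fin.val_succ]; have := not_le.mp h1; omega) h
  · exfalso
    rw [enc_inr] at h
    by_cases h2 : x₂ ≤ y₂
    · rw [enc_inl_of_le h2] at h
      exact E_ne_one (by rw [Fin.coe_castSucc, Fin.val_succ]; have : x₂.val ≤ y₂.val := h2; omega)
        h.symm
    · rw [enc_inl_of_not_le h2] at h
      exact E_ne_one (by rw [Fin.coe_castSucc, Fin.val_succ]; have := not_le.mp h2; omega) h.symm
  · rfl

lemma enc_surj (d : ℕ) (σ : Equiv.Perm (Fin (d+1))) (hσ : ContainsInc (d+1) d σ) :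
    ∃ a, enc d a = σ := by
  obtain ⟨p, v, rfl⟩ := (containsInc_iff σ).mp hσ
  have hp := p.isLt
  have hv := v.isLt
  rcases lt_trichotomy p.val v.val with hlt | heq | hgt
  · obtain ⟨x, hx⟩ : ∃ x : Fin d, x.val = p.val := ⟨⟨p.val, by omega⟩, rfl⟩
    obtain ⟨y, hy⟩ : ∃ y : Fin d, y.val = v.val - 1 := ⟨⟨v.val - 1, by omega⟩, rfl⟩
    refine ⟨Sum.inl (x, y), ?_⟩
    rw [enc_inl_of_le (Fin.le_def.mpr (by omega))]
    congr 1
    · exact Fin.ext (by rw [Fin.coe_castSucc, hx])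
    · exact Fin.ext (by rw [Fin.val_succ, hy]; omega)
  · obtain rfl : p = v := Fin.ext heq
    exact ⟨Sum.inr (), by rw [enc_inr, E_diag]⟩
  · rcases eq_or_lt_of_le (Nat.succ_le_of_lt hgt) with hadj | hgap
    · obtain ⟨x, hx⟩ : ∃ x : Fin d, x.val = v.val := ⟨⟨v.val, by omega⟩, rfl⟩
      obtain ⟨y, hy⟩ : ∃ y : Fin d, y.val = v.val := ⟨⟨v.val, by omega⟩, rfl⟩
      refine ⟨Sum.inl (x, y), ?_⟩
      rw [enc_inl_of_le (Fin.le_def.mpr (by omega)),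
        adjacent_swap (show v.val + 1 = p.val from hadj)]
      congr 1
      · exact Fin.ext (by rw [Fin.coe_castSucc, hx])
      · exact Fin.ext (by rw [Fin.val_succ, hy]; omega)
    · obtain ⟨x, hx⟩ : ∃ x : Fin d, x.val = p.val - 1 := ⟨⟨p.val - 1, by omega⟩, rfl⟩
      obtain ⟨y, hy⟩ : ∃ y : Fin d, y.val = v.val := ⟨⟨v.val, by omega⟩, rfl⟩
      refine ⟨Sum.inl (x, y), ?_⟩
      rw [enc_inl_of_not_le (by rw [not_le, Fin.lt_def]; omega)]
      congr 1
      · exact Fin.ext (by rw [Fin.val_succ, hx]; omega)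
      · exact Fin.ext (by rw [Fin.coe_castSucc, hy])


/-- For every `d ≥ 1`, the number of permutations of length `d+1` containing an
increasing subsequence of length `d` equals `d² + 1`. -/
theorem stmt1 (d : ℕ) (hd : 1 ≤ d) : B d (d + 1) = d ^ 2 + 1 := by
  unfold B
  have hbij : Function.Bijective
      (fun a : Fin d × Fin d ⊕ Unit =>
        (⟨enc d a, by
          obtain ⟨p, v, hpv⟩ := enc_exists d a
          exact (containsInc_iff _).mpr ⟨p, v, hpv⟩⟩ :
          {σ : Equiv.Perm (Fin (d+1)) // ContainsInc (d+1) d σ})) := by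
    constructor
    · intro a b hab
      exact enc_inj d (congrArg Subtype.val hab)
    · rintro ⟨σ, hσ⟩
      obtain ⟨a, ha⟩ := enc_surj d σ hσ
      exact ⟨a, Subtype.ext ha⟩
  rw [← Nat.card_eq_of_bijective _ hbij]
  simp [Nat.card_eq_fintype_card]
  ring
end

section
/- For every d ≥ 1, the number of permutations of {1,...,d+2} containing an increasing subsequence of length d equals (1/2)d^4 + d^3 + (1/2)d^2 + d + 3, i.e. 2·B_d(d+2) = d^4 + 2d^3 + d^2 + 2d + 6. -/
/-
Delete the largest value from a permutation of `Fin (n + 1)`: what remains is a permutation `τ`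
of `Fin n` and the position `k` the maximum occupied. An increasing subsequence of length `m + 1`
either avoids position `k`, and is then one of `τ`, or passes through it, and then ends there and
is preceded by an increasing subsequence of length `m` of `τ` lying before `k`. To close this
recursion one counts, more generally, permutations of `Fin n` with an increasing subsequence of
length `m` among the first `c` positions. When `n - m ≤ 2`, each position `k` leads back to such a
count for `n - 1`, or to zero; where both alternatives occur at once, inclusion–exclusion reduces
the union to an intersection that is small enough to count directly.
-/

theorem strictMono_comp_iff {α β γ : Type*} [Preorder α] [LinearOrder β] [Preorder γ]
    {g : β → γ} (hg : StrictMono g) {s : α → β} :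
    StrictMono (fun i => g (s i)) ↔ StrictMono s :=
  ⟨fun h _ _ hab => hg.lt_iff_lt.mp (h hab), hg.comp⟩

theorem Fin.strictMono_snoc {α : Type*} [Preorder α] {m : ℕ} {f : Fin m → α} (hf : StrictMono f)
    {x : α} (hx : ∀ i, f i < x) : StrictMono (Fin.snoc f x : Fin (m + 1) → α) := by
  rw [← Fin.insertNth_last', Fin.strictMono_insertNth_iff]
  exact ⟨hf, fun i _ => hx i, fun i hi => absurd hi (Fin.castSucc_lt_last i).not_ge⟩

theorem Nat.card_subtype_or_add_card_subtype_and {α : Type*} [Finite α] (p q : α → Prop) :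
    Nat.card {x // p x ∨ q x} + Nat.card {x // p x ∧ q x} =
      Nat.card {x // p x} + Nat.card {x // q x} := by
  have h := Set.ncard_union_add_ncard_inter {x | p x} {x | q x}
  simp only [← Nat.card_coe_set_eq] at h
  exact h

namespace IncSubseq

open Equiv

variable {n : ℕ}

def insertMax (k : Fin (n + 1)) (τ : Perm (Fin n)) : Perm (Fin (n + 1)) :=
  (finSuccEquiv' k).trans ((optionCongr τ).trans (finSuccEquiv' (Fin.last n)).symm)

@[simp] theorem insertMax_apply_self (k : Fin (n + 1)) (τ : Perm (Fin n)) :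
    insertMax k τ k = Fin.last n := by
  simp [insertMax, finSuccEquiv'_at]

@[simp] theorem insertMax_apply_succAbove (k : Fin (n + 1)) (τ : Perm (Fin n)) (j : Fin n) :
    insertMax k τ (k.succAbove j) = (τ j).castSucc := by
  simp [insertMax, finSuccEquiv'_succAbove, Fin.succAbove_last]

theorem insertMax_injective :
    Function.Injective (fun x : Fin (n + 1) × Perm (Fin n) => insertMax x.1 x.2) := by
  rintro ⟨k, τ⟩ ⟨k', τ'⟩ h
  simp only at h
  obtain rfl : k = k' := (insertMax k' τ').injective <| by
    rw [insertMax_apply_self, ← h, insertMax_apply_self]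
  have : τ = τ' := Equiv.ext fun j => Fin.castSucc_injective _ <| by
    rw [← insertMax_apply_succAbove, ← insertMax_apply_succAbove, h]
  rw [this]

theorem insertMax_bijective :
    Function.Bijective (fun x : Fin (n + 1) × Perm (Fin n) => insertMax x.1 x.2) := by
  rw [Fintype.bijective_iff_injective_and_card]
  exact ⟨insertMax_injective, by simp [Fintype.card_perm, Nat.factorial_succ]⟩

theorem card_perm_succ_subtype (P : Perm (Fin (n + 1)) → Prop) :
    Nat.card {σ // P σ} = ∑ k, Nat.card {τ : Perm (Fin n) // P (insertMax k τ)} := by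
  classical
  let e : {x : Fin (n + 1) × Perm (Fin n) // P (insertMax x.1 x.2)} ≃ {σ // P σ} :=
    (Equiv.ofBijective _ insertMax_bijective).subtypeEquiv fun _ => Iff.rfl
  rw [← Nat.card_congr e,
    Nat.card_congr (subtypeProdEquivSigmaSubtype fun k τ => P (insertMax k τ))]
  simp [Nat.card_eq_fintype_card]

def ContainsIncBefore (n m c : ℕ) (σ : Perm (Fin n)) : Prop :=
  ∃ s : Fin m → Fin n, StrictMono s ∧ StrictMono (fun i => σ (s i)) ∧ ∀ i, (s i : ℕ) < c

theorem containsInc_iff_containsIncBefore {m : ℕ} (σ : Perm (Fin n)) :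
    ContainsInc n m σ ↔ ContainsIncBefore n m n σ :=
  ⟨fun ⟨s, hs, hσs⟩ => ⟨s, hs, hσs, fun i => (s i).isLt⟩,
    fun ⟨s, hs, hσs, _⟩ => ⟨s, hs, hσs⟩⟩

namespace ContainsIncBefore

variable {m c : ℕ} {σ : Perm (Fin n)}

theorem le (h : ContainsIncBefore n m c σ) : m ≤ c := by
  obtain ⟨s, hs, -, hc⟩ := h
  simpa using Fintype.card_le_of_injective (fun i => (⟨s i, hc i⟩ : Fin c))
    fun i j hij => hs.injective (Fin.ext (Fin.mk.inj hij))

theorem mono {c' : ℕ} (h : ContainsIncBefore n m c σ) (hc : c ≤ c') :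
    ContainsIncBefore n m c' σ :=
  let ⟨s, hs, hσs, hsc⟩ := h
  ⟨s, hs, hσs, fun i => (hsc i).trans_le hc⟩

theorem of_succ (h : ContainsIncBefore n (m + 1) c σ) : ContainsIncBefore n m (c - 1) σ :=
  let ⟨s, hs, hσs, hc⟩ := h
  ⟨fun i => s i.castSucc, hs.comp Fin.strictMono_castSucc, hσs.comp Fin.strictMono_castSucc,
    fun i => Fin.lt_def.mp (hs (Fin.castSucc_lt_last i)) |>.trans_le (Nat.le_sub_one_of_lt (hc _))⟩

end ContainsIncBefore

theorem containsIncBefore_zero (c : ℕ) (σ : Perm (Fin n)) : ContainsIncBefore n 0 c σ :=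
  ⟨Fin.elim0, fun i => i.elim0, fun i => i.elim0, fun i => i.elim0⟩

theorem containsIncBefore_self_iff (σ : Perm (Fin n)) : ContainsIncBefore n n n σ ↔ σ = 1 := by
  refine ⟨fun ⟨s, hs, hσs, _⟩ => ?_, ?_⟩
  · rw [hs.eq_id] at hσs
    exact Equiv.ext fun i => congrFun hσs.eq_id i
  · rintro rfl
    exact ⟨id, strictMono_id, strictMono_id, fun i => i.isLt⟩

variable {m c : ℕ} (k : Fin (n + 1)) (τ : Perm (Fin n))

theorem exists_avoiding_insertMax_iff {c' : ℕ}
    (hc : ∀ j : Fin n, (k.succAbove j : ℕ) < c ↔ (j : ℕ) < c') :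
    (∃ s : Fin m → Fin (n + 1), StrictMono s ∧ StrictMono (fun i => insertMax k τ (s i)) ∧
      (∀ i, (s i : ℕ) < c) ∧ ∀ i, s i ≠ k) ↔ ContainsIncBefore n m c' τ := by
  have hlift : ∀ s : Fin m → Fin n, StrictMono (fun i => k.succAbove (s i)) ∧
      StrictMono (fun i => insertMax k τ (k.succAbove (s i))) ↔
        StrictMono s ∧ StrictMono (fun i => τ (s i)) := fun s => by
    simp only [insertMax_apply_succAbove, strictMono_comp_iff (Fin.strictMono_succAbove k),
      strictMono_comp_iff Fin.strictMono_castSucc]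
  constructor
  · rintro ⟨s, hs, hσs, hsc, hsk⟩
    choose s' hs' using fun i => Fin.exists_succAbove_eq (hsk i)
    obtain rfl : s = fun i => k.succAbove (s' i) := funext fun i => (hs' i).symm
    exact ⟨s', (hlift s').1 ⟨hs, hσs⟩ |>.1, (hlift s').1 ⟨hs, hσs⟩ |>.2,
      fun i => (hc _).1 (hsc i)⟩
  · rintro ⟨s', hs', hτs', hs'c⟩
    exact ⟨fun i => k.succAbove (s' i), (hlift s').2 ⟨hs', hτs'⟩ |>.1,
      (hlift s').2 ⟨hs', hτs'⟩ |>.2, fun i => (hc _).2 (hs'c i), fun i => k.succAbove_ne _⟩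

theorem val_succAbove_lt_iff_of_le (hk : c ≤ k) (j : Fin n) :
    (k.succAbove j : ℕ) < c ↔ (j : ℕ) < c := by
  rcases lt_or_ge j.castSucc k with h | h
  · rw [Fin.succAbove_of_castSucc_lt _ _ h, Fin.val_castSucc]
  · rw [Fin.succAbove_of_le_castSucc _ _ h, Fin.val_succ]
    rw [Fin.le_def, Fin.val_castSucc] at h
    omega

theorem val_succAbove_lt_iff_of_lt (hk : (k : ℕ) < c) (j : Fin n) :
    (k.succAbove j : ℕ) < c ↔ (j : ℕ) < c - 1 := by
  rcases lt_or_ge j.castSucc k with h | h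
  · rw [Fin.succAbove_of_castSucc_lt _ _ h, Fin.val_castSucc]
    rw [Fin.lt_def, Fin.val_castSucc] at h
    omega
  · rw [Fin.succAbove_of_le_castSucc _ _ h, Fin.val_succ]
    omega

theorem containsIncBefore_insertMax_of_le (hk : c ≤ k) :
    ContainsIncBefore (n + 1) m c (insertMax k τ) ↔ ContainsIncBefore n m c τ := by
  rw [← exists_avoiding_insertMax_iff k τ (val_succAbove_lt_iff_of_le k hk)]
  refine ⟨fun ⟨s, hs, hσs, hsc⟩ => ⟨s, hs, hσs, hsc, fun i hi => ?_⟩,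
    fun ⟨s, hs, hσs, hsc, _⟩ => ⟨s, hs, hσs, hsc⟩⟩
  have := hsc i
  rw [hi] at this
  omega

-- A subsequence through position `k` ends there, as `insertMax k τ k` is the largest value.
theorem containsIncBefore_insertMax_of_lt (hk : (k : ℕ) < c) :
    ContainsIncBefore (n + 1) (m + 1) c (insertMax k τ) ↔
      ContainsIncBefore n m k τ ∨ ContainsIncBefore n (m + 1) (c - 1) τ := by
  rw [← exists_avoiding_insertMax_iff k τ (val_succAbove_lt_iff_of_lt k hk),
    ← exists_avoiding_insertMax_iff k τ (val_succAbove_lt_iff_of_le k le_rfl)]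
  constructor
  · rintro ⟨s, hs, hσs, hsc⟩
    by_cases hsk : ∀ i, s i ≠ k
    · exact Or.inr ⟨s, hs, hσs, hsc, hsk⟩
    push Not at hsk
    obtain ⟨i₀, hi₀⟩ := hsk
    have hlast : s (Fin.last m) = k := by
      by_contra hne
      have h := hσs ((Fin.le_last i₀).lt_of_ne fun h => hne (h ▸ hi₀))
      simp only [hi₀, insertMax_apply_self] at h
      exact (Fin.le_last _).not_gt h
    have hlt : ∀ i : Fin m, s i.castSucc < k := fun i => hlast ▸ hs (Fin.castSucc_lt_last i)
    exact Or.inl ⟨fun i => s i.castSucc, hs.comp Fin.strictMono_castSucc,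
      hσs.comp Fin.strictMono_castSucc, fun i => hlt i, fun i => (hlt i).ne⟩
  · rintro (⟨s, hs, hσs, hsk, -⟩ | ⟨s, hs, hσs, hsc, -⟩)
    · have hσk : ∀ i, insertMax k τ (s i) < insertMax k τ k := fun i =>
        (insertMax_apply_self k τ).symm ▸ (Fin.le_last _).lt_of_ne
          fun h => (show s i < k from hsk i).ne ((insertMax k τ).injective (by simp [h]))
      refine ⟨Fin.snoc s k, Fin.strictMono_snoc hs hsk, ?_, fun i => ?_⟩
      · rw [← Function.comp_def, Fin.comp_snoc]
        exact Fin.strictMono_snoc hσs hσk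
      · cases i using Fin.lastCases with
        | last => simpa using hk
        | cast i => simpa using (hsk i).trans hk
    · exact ⟨s, hs, hσs, hsc⟩

noncomputable def incCount (n m c : ℕ) : ℕ :=
  Nat.card {τ : Perm (Fin n) // ContainsIncBefore n m c τ}

theorem incCount_congr {P : Perm (Fin n) → Prop}
    (h : ∀ τ, P τ ↔ ContainsIncBefore n m c τ) : Nat.card {τ // P τ} = incCount n m c :=
  Nat.card_congr (subtypeEquivRight h)

theorem incCount_zero (n c : ℕ) : incCount n 0 c = n.factorial := by
  rw [incCount, Nat.card_congr (subtypeUnivEquiv (containsIncBefore_zero c)), Nat.card_perm,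
    Nat.card_fin]

theorem incCount_self (n : ℕ) : incCount n n n = 1 := by
  rw [← incCount_congr fun τ => (containsIncBefore_self_iff τ).symm, Nat.card_unique]

theorem incCount_eq_zero_of_lt (n : ℕ) (h : c < m) : incCount n m c = 0 := by
  rw [incCount, Nat.card_eq_zero]
  exact Or.inl ⟨fun τ => h.not_ge τ.2.le⟩

theorem containsIncBefore_insertMax_of_lt_of_lt (hkc : (k : ℕ) < c) (hkm : (k : ℕ) < m) :
    ContainsIncBefore (n + 1) (m + 1) c (insertMax k τ) ↔ ContainsIncBefore n (m + 1) (c - 1) τ :=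
  (containsIncBefore_insertMax_of_lt k τ hkc).trans (or_iff_right fun h => hkm.not_ge h.le)

theorem containsIncBefore_insertMax_of_lt_of_le (hkc : (k : ℕ) < c) (hck : c ≤ k + 2) :
    ContainsIncBefore (n + 1) (m + 1) c (insertMax k τ) ↔ ContainsIncBefore n m k τ :=
  (containsIncBefore_insertMax_of_lt k τ hkc).trans
    (or_iff_left_of_imp fun h => h.of_succ.mono (by omega))

theorem card_insertMax_of_le (m c : ℕ) (k : Fin (n + 1)) (hk : c ≤ k) :
    Nat.card {τ // ContainsIncBefore (n + 1) m c (insertMax k τ)} = incCount n m c :=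
  incCount_congr fun τ => containsIncBefore_insertMax_of_le k τ hk

theorem card_insertMax_of_lt_of_lt (m c : ℕ) (k : Fin (n + 1)) (hkc : (k : ℕ) < c)
    (hkm : (k : ℕ) < m) :
    Nat.card {τ // ContainsIncBefore (n + 1) (m + 1) c (insertMax k τ)} =
      incCount n (m + 1) (c - 1) :=
  incCount_congr fun τ => containsIncBefore_insertMax_of_lt_of_lt k τ hkc hkm

theorem card_insertMax_of_lt_of_le (m c : ℕ) (k : Fin (n + 1)) (hkc : (k : ℕ) < c)
    (hck : c ≤ k + 2) :
    Nat.card {τ // ContainsIncBefore (n + 1) (m + 1) c (insertMax k τ)} = incCount n m k :=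
  incCount_congr fun τ => containsIncBefore_insertMax_of_lt_of_le k τ hkc hck

theorem incCount_add_one_self_self (n : ℕ) : incCount (n + 1) n n = n + 1 := by
  induction n with
  | zero => simp [incCount_zero]
  | succ n ih =>
    rw [incCount, card_perm_succ_subtype, Fin.sum_univ_castSucc, Fin.sum_univ_castSucc,
      Finset.sum_congr rfl fun k _ => (card_insertMax_of_lt_of_lt n (n + 1) k.castSucc.castSucc
        (by simp) (by simp)).trans (incCount_eq_zero_of_lt _ (by omega)),
      card_insertMax_of_lt_of_le n (n + 1) _ (by simp) (by simp),
      card_insertMax_of_le (n + 1) (n + 1) _ (by simp)]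
    simp only [Finset.sum_const_zero, Fin.val_castSucc, Fin.val_last, ih, incCount_self, zero_add]

theorem incCount_add_two_self_self (n : ℕ) : incCount (n + 2) n n = (n + 1) * (n + 2) := by
  induction n with
  | zero => simp [incCount_zero]
  | succ n ih =>
    rw [incCount, card_perm_succ_subtype, Fin.sum_univ_castSucc, Fin.sum_univ_castSucc,
      Fin.sum_univ_castSucc,
      Finset.sum_congr rfl fun k _ => (card_insertMax_of_lt_of_lt n (n + 1)
        k.castSucc.castSucc.castSucc (by simp) (by simp)).trans
        (incCount_eq_zero_of_lt _ (by omega)),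
      card_insertMax_of_lt_of_le n (n + 1) _ (by simp) (by simp),
      card_insertMax_of_le (n + 1) (n + 1) _ (by simp),
      card_insertMax_of_le (n + 1) (n + 1) _ (by simp)]
    simp only [Finset.sum_const_zero, Fin.val_castSucc, Fin.val_last, ih, zero_add,
      incCount_add_one_self_self]
    ring

theorem incCount_add_one_self_add_one (n : ℕ) : incCount (n + 1) n (n + 1) = n ^ 2 + 1 := by
  induction n with
  | zero => simp [incCount_zero]
  | succ n ih =>
    rw [incCount, card_perm_succ_subtype, Fin.sum_univ_castSucc, Fin.sum_univ_castSucc,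
      Finset.sum_congr rfl fun k _ => (card_insertMax_of_lt_of_lt n (n + 2) k.castSucc.castSucc
        (by simp; omega) (by simp)).trans (incCount_self _),
      card_insertMax_of_lt_of_le n (n + 2) _ (by simp) (by simp),
      card_insertMax_of_lt_of_le n (n + 2) _ (by simp) (by simp)]
    simp only [Finset.sum_const, Finset.card_univ, Fintype.card_fin, smul_eq_mul, mul_one,
      Fin.val_castSucc, Fin.val_last, ih, incCount_add_one_self_self]
    ring

theorem incCount_add_two_self_add_one (n : ℕ) :
    incCount (n + 2) n (n + 1) = (n + 2) * (n ^ 2 + 1) := by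
  induction n with
  | zero => simp [incCount_zero]
  | succ n ih =>
    rw [incCount, card_perm_succ_subtype, Fin.sum_univ_castSucc, Fin.sum_univ_castSucc,
      Fin.sum_univ_castSucc,
      Finset.sum_congr rfl fun k _ => (card_insertMax_of_lt_of_lt n (n + 2)
        k.castSucc.castSucc.castSucc (by simp; omega) (by simp)).trans
        (incCount_add_one_self_self _),
      card_insertMax_of_lt_of_le n (n + 2) _ (by simp) (by simp),
      card_insertMax_of_lt_of_le n (n + 2) _ (by simp) (by simp),
      card_insertMax_of_le (n + 1) (n + 2) _ (by simp)]
    simp only [Finset.sum_const, Finset.card_univ, Fintype.card_fin, smul_eq_mul,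
      Fin.val_castSucc, Fin.val_last, ih, incCount_add_two_self_self,
      incCount_add_one_self_add_one]
    ring

theorem card_containsIncBefore_and {d : ℕ} (hd : 1 ≤ d) :
    Nat.card {τ : Perm (Fin (d + 2)) //
      ContainsIncBefore (d + 2) d d τ ∧ ContainsIncBefore (d + 2) (d + 1) (d + 2) τ} =
      2 * d + 3 := by
  obtain ⟨n, rfl⟩ := Nat.exists_eq_add_of_le' hd
  have low (k : Fin n) : Nat.card {τ : Perm (Fin (n + 2)) //
      ContainsIncBefore (n + 3) (n + 1) (n + 1) (insertMax k.castSucc.castSucc.castSucc τ) ∧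
        ContainsIncBefore (n + 3) (n + 2) (n + 3) (insertMax k.castSucc.castSucc.castSucc τ)} =
      0 := by
    rw [Nat.card_eq_zero]
    refine Or.inl ⟨fun ⟨τ, h, _⟩ => ?_⟩
    have := ((containsIncBefore_insertMax_of_lt_of_lt _ τ (by simp) (by simp)).1 h).le
    omega
  rw [card_perm_succ_subtype, Fin.sum_univ_castSucc, Fin.sum_univ_castSucc,
    Fin.sum_univ_castSucc, Finset.sum_congr rfl fun k _ => low k,
    incCount_congr fun τ => (and_congr
      (containsIncBefore_insertMax_of_lt_of_le (Fin.last n).castSucc.castSucc τ (by simp) (by simp))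
      (containsIncBefore_insertMax_of_lt_of_lt (Fin.last n).castSucc.castSucc τ (by simp; omega)
        (by simp))).trans
      ⟨And.right, fun h => ⟨h.of_succ.of_succ.mono (by simp), h⟩⟩,
    incCount_congr fun τ => (and_congr
      (containsIncBefore_insertMax_of_le (m := n + 1) (c := n + 1) (Fin.last (n + 1)).castSucc τ
        (by simp))
      (containsIncBefore_insertMax_of_lt_of_le (Fin.last (n + 1)).castSucc τ (by simp)
        (by simp))).trans and_self_iff,
    incCount_congr fun τ => (and_congr
      (containsIncBefore_insertMax_of_le (m := n + 1) (c := n + 1) (Fin.last (n + 2)) τ (by simp))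
      (containsIncBefore_insertMax_of_lt_of_le (Fin.last (n + 2)) τ (by simp) (by simp))).trans
      ⟨And.left, fun h => ⟨h, h.mono (by simp)⟩⟩]
  simp only [Finset.sum_const_zero, Nat.add_one_sub_one, incCount_self, zero_add,
    incCount_add_one_self_self]
  ring

theorem card_containsIncBefore_or {d : ℕ} (hd : 1 ≤ d) :
    Nat.card {τ : Perm (Fin (d + 2)) //
      ContainsIncBefore (d + 2) d d τ ∨ ContainsIncBefore (d + 2) (d + 1) (d + 2) τ} =
      (d + 1) * (2 * d + 1) := by
  have h := Nat.card_subtype_or_add_card_subtype_and (ContainsIncBefore (d + 2) d d)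
    (ContainsIncBefore (d + 2) (d + 1) (d + 2))
  rw [card_containsIncBefore_and hd] at h
  change _ = incCount (d + 2) d d + incCount (d + 2) (d + 1) (d + 2) at h
  rw [incCount_add_two_self_self, incCount_add_one_self_add_one] at h
  linarith

theorem incCount_three_one_three : incCount 3 1 3 = 6 := by
  rw [incCount, Nat.card_congr (subtypeUnivEquiv fun τ => ⟨fun _ => 0, Subsingleton.strictMono _,
    Subsingleton.strictMono _, fun _ => by simp⟩), Nat.card_perm, Nat.card_fin]
  rfl

theorem two_mul_incCount_add_two_self_add_two {d : ℕ} (hd : 1 ≤ d) :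
    2 * incCount (d + 2) d (d + 2) = d ^ 4 + 2 * d ^ 3 + d ^ 2 + 2 * d + 6 := by
  induction d, hd using Nat.le_induction with
  | base => norm_num [incCount_three_one_three]
  | succ d hd ih =>
    rw [incCount, card_perm_succ_subtype, Fin.sum_univ_castSucc, Fin.sum_univ_castSucc,
      Fin.sum_univ_castSucc,
      Finset.sum_congr rfl fun k _ => (card_insertMax_of_lt_of_lt d (d + 3)
        k.castSucc.castSucc.castSucc (by simp; omega) (by simp)).trans
        (incCount_add_one_self_add_one _),
      Nat.card_congr (subtypeEquivRight fun τ => containsIncBefore_insertMax_of_lt (m := d)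
        (c := d + 3) (Fin.last d).castSucc.castSucc τ (by simp)),
      card_insertMax_of_lt_of_le d (d + 3) _ (by simp) (by simp),
      card_insertMax_of_lt_of_le d (d + 3) _ (by simp) (by simp)]
    simp only [Finset.sum_const, Finset.card_univ, Fintype.card_fin, smul_eq_mul,
      Fin.val_castSucc, Fin.val_last, Nat.reduceSubDiff, card_containsIncBefore_or hd,
      incCount_add_two_self_add_one]
    linarith

end IncSubseq

/-- For every `d ≥ 1`, `B_d(d+2) = d⁴/2 + d³ + d²/2 + d + 3`,
i.e. `2·B_d(d+2) = d⁴ + 2d³ + d² + 2d + 6`. -/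
theorem stmt2 (d : ℕ) (hd : 1 ≤ d) :
    2 * B d (d + 2) = d ^ 4 + 2 * d ^ 3 + d ^ 2 + 2 * d + 6 := by
  rw [B, IncSubseq.incCount_congr fun σ => IncSubseq.containsInc_iff_containsIncBefore σ]
  exact IncSubseq.two_mul_incCount_add_two_self_add_two hd
end

section
/- For all n, the number of permutations of {1,...,n} with no increasing subsequence of length 3 equals the n-th Catalan number C_n = (1/(n+1))·binomial(2n, n). -/
/-! ### Auxiliary development -/

/-- The values of `σ` on the first `d` positions are strictly decreasing. -/
def DecOn {n : ℕ} (σ : Equiv.Perm (Fin n)) (d : ℕ) : Prop :=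
  ∀ i j : Fin n, i < j → (j : ℕ) < d → σ j < σ i

/-- Refined count: 123-avoiding permutations whose first `d` values decrease. -/
noncomputable def Fcnt (n d : ℕ) : ℕ :=
  Nat.card {σ : Equiv.Perm (Fin n) // ¬ ContainsInc n 3 σ ∧ DecOn σ d}

lemma decOn_mono {n : ℕ} {σ : Equiv.Perm (Fin n)} {d d' : ℕ} (h : d' ≤ d)
    (hd : DecOn σ d) : DecOn σ d' :=
  fun i j hij hj => hd i j hij (lt_of_lt_of_le hj h)

lemma decOn_one {n : ℕ} (σ : Equiv.Perm (Fin n)) : DecOn σ 1 := by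
  intro i j hij hj
  have hi := Fin.lt_def.mp hij
  omega

lemma decOn_zero {n : ℕ} (σ : Equiv.Perm (Fin n)) : DecOn σ 0 := by
  intro i j _ hj; omega

lemma strictMono3 {α : Type*} [Preorder α] {a b c : α} (h1 : a < b) (h2 : b < c) :
    StrictMono (fun i : Fin 3 => if (i : ℕ) = 0 then a else if (i : ℕ) = 1 then b else c) := by
  intro i j hij
  have hi := i.isLt
  have hj := j.isLt
  have hij' := Fin.lt_def.mp hij
  simp only []
  split_ifs <;>
    first
      | exact h1
      | exact h2
      | exact h1.trans h2
      | (exfalso; omega)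

lemma containsInc3_iff {n : ℕ} (σ : Equiv.Perm (Fin n)) :
    ContainsInc n 3 σ ↔ ∃ a b c : Fin n, a < b ∧ b < c ∧ σ a < σ b ∧ σ b < σ c := by
  constructor
  · rintro ⟨s, hs, hσs⟩
    exact ⟨s 0, s 1, s 2, hs (by decide), hs (by decide), hσs (by decide), hσs (by decide)⟩
  · rintro ⟨a, b, c, hab, hbc, h1, h2⟩
    refine ⟨fun i : Fin 3 => if (i : ℕ) = 0 then a else if (i : ℕ) = 1 then b else c,
      strictMono3 hab hbc, ?_⟩
    have := strictMono3 h1 h2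
    simpa only [apply_ite σ] using this

/-- Insert the new maximum at position `p`. -/
def ins {n : ℕ} (τ : Equiv.Perm (Fin n)) (p : Fin (n + 1)) : Equiv.Perm (Fin (n + 1)) :=
  ((finSuccEquiv' p).trans (Equiv.optionCongr τ)).trans (finSuccEquiv' (Fin.last n)).symm

lemma ins_self {n : ℕ} (τ : Equiv.Perm (Fin n)) (p : Fin (n + 1)) :
    ins τ p p = Fin.last n := by
  simp [ins, finSuccEquiv'_at]

lemma ins_succAbove {n : ℕ} (τ : Equiv.Perm (Fin n)) (p : Fin (n + 1)) (i : Fin n) :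
    ins τ p (p.succAbove i) = (τ i).castSucc := by
  simp [ins, finSuccEquiv'_succAbove, finSuccEquiv'_symm_some, Fin.succAbove_last]

lemma ins_lt_last {n : ℕ} (τ : Equiv.Perm (Fin n)) (p : Fin (n + 1)) {q : Fin (n + 1)}
    (hq : q ≠ p) : ins τ p q < Fin.last n := by
  obtain ⟨i, rfl⟩ := Fin.exists_succAbove_eq hq
  rw [ins_succAbove]
  exact Fin.castSucc_lt_last _

/-- The decomposition `(p, τ) ↦ ins τ p` is a bijection. -/
noncomputable def insEquiv (n : ℕ) : (Fin (n + 1) × Equiv.Perm (Fin n)) ≃ Equiv.Perm (Fin (n + 1)) := by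
  refine Equiv.ofBijective (fun x => ins x.2 x.1) ⟨?_, ?_⟩
  · rintro ⟨p, τ⟩ ⟨p', τ'⟩ h
    have happ : ins τ p = ins τ' p' := h
    have hp : p = p' := by
      by_contra hne
      have h1 : ins τ p p = Fin.last n := ins_self τ p
      have h2 : ins τ' p' p < Fin.last n := ins_lt_last τ' p' hne
      rw [← happ, h1] at h2
      exact lt_irrefl _ h2
    subst hp
    have hτ : τ = τ' := by
      apply Equiv.ext
      intro i
      have h3 := DFunLike.congr_fun happ (p.succAbove i)
      rw [ins_succAbove, ins_succAbove] at h3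
      exact Fin.castSucc_injective _ h3
    rw [hτ]
  · intro σ
    set p := σ.symm (Fin.last n) with hp
    have hσp : σ p = Fin.last n := Equiv.apply_symm_apply σ _
    have hne : ∀ i : Fin n, σ (p.succAbove i) ≠ Fin.last n := by
      intro i h
      exact Fin.succAbove_ne p i (σ.injective (h.trans hσp.symm))
    have hlt : ∀ i : Fin n, σ (p.succAbove i) < Fin.last n :=
      fun i => lt_of_le_of_ne (Fin.le_last _) (hne i)
    let τ₀ : Fin n → Fin n := fun i => (σ (p.succAbove i)).castPred (hne i)
    have hτ₀ : Function.Injective τ₀ := by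
      intro a b hab
      have : σ (p.succAbove a) = σ (p.succAbove b) := by
        have := congrArg Fin.castSucc hab
        simpa [τ₀, Fin.castSucc_castPred] using this
      exact Fin.succAbove_right_injective (σ.injective this)
    have hbij : Function.Bijective τ₀ := (Finite.injective_iff_bijective).mp hτ₀
    refine ⟨⟨p, Equiv.ofBijective τ₀ hbij⟩, ?_⟩
    ext q
    rcases eq_or_ne q p with rfl | hq
    · simp [ins_self, hσp]
    · obtain ⟨i, rfl⟩ := Fin.exists_succAbove_eq hq
      simp only [ins_succAbove, Equiv.ofBijective_apply]
      simp [τ₀, Fin.castSucc_castPred]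

lemma insEquiv_apply {n : ℕ} (p : Fin (n + 1)) (τ : Equiv.Perm (Fin n)) :
    insEquiv n (p, τ) = ins τ p := rfl

lemma av_ins_iff {n : ℕ} (τ : Equiv.Perm (Fin n)) (p : Fin (n + 1)) :
    ¬ ContainsInc (n + 1) 3 (ins τ p) ↔
      (¬ ContainsInc n 3 τ ∧ DecOn τ (p : ℕ)) := by
  constructor
  · intro h
    constructor
    · intro hc
      apply h
      rw [containsInc3_iff] at hc ⊢
      obtain ⟨a, b, c, hab, hbc, h1, h2⟩ := hc
      refine ⟨p.succAbove a, p.succAbove b, p.succAbove c,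
        Fin.succAbove_lt_succAbove_iff.mpr hab, Fin.succAbove_lt_succAbove_iff.mpr hbc, ?_, ?_⟩ <;>
        simp only [ins_succAbove] <;>
        [exact Fin.castSucc_lt_castSucc_iff.mpr h1; exact Fin.castSucc_lt_castSucc_iff.mpr h2]
    · intro i j hij hj
      by_contra hle
      have hij' : τ i < τ j :=
        lt_of_le_of_ne (not_lt.mp hle) (fun he => hij.ne (τ.injective he))
      apply h
      rw [containsInc3_iff]
      have hip : (i : ℕ) < (p : ℕ) := lt_trans (Fin.lt_def.mp hij) hj
      have hci : Fin.castSucc i < p := by rw [Fin.lt_def]; simpa using hip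
      have hcj : Fin.castSucc j < p := by rw [Fin.lt_def]; simpa using hj
      refine ⟨Fin.castSucc i, Fin.castSucc j, p,
        Fin.castSucc_lt_castSucc_iff.mpr hij, hcj, ?_, ?_⟩
      · rw [← Fin.succAbove_of_castSucc_lt _ _ hci, ← Fin.succAbove_of_castSucc_lt _ _ hcj,
          ins_succAbove, ins_succAbove]
        exact Fin.castSucc_lt_castSucc_iff.mpr hij'
      · rw [← Fin.succAbove_of_castSucc_lt _ _ hcj, ins_succAbove, ins_self]
        exact Fin.castSucc_lt_last _
  · rintro ⟨hτ, hdec⟩ hc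
    rw [containsInc3_iff] at hc
    obtain ⟨a, b, c, hab, hbc, h1, h2⟩ := hc
    rcases eq_or_ne a p with rfl | ha
    · rw [ins_self] at h1
      exact absurd (lt_of_le_of_lt (Fin.le_last _) h1) (lt_irrefl _)
    rcases eq_or_ne b p with rfl | hb
    · rw [ins_self] at h2
      exact absurd (lt_of_le_of_lt (Fin.le_last _) h2) (lt_irrefl _)
    obtain ⟨a', rfl⟩ := Fin.exists_succAbove_eq ha
    obtain ⟨b', rfl⟩ := Fin.exists_succAbove_eq hb
    rcases eq_or_ne c p with hcp | hc'
    · -- a, b before p, increasing values, contradicting DecOn τ p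
      rw [hcp] at hbc
      rw [ins_succAbove, ins_succAbove] at h1
      have h1' : τ a' < τ b' := Fin.castSucc_lt_castSucc_iff.mp h1
      have hab' : a' < b' := Fin.succAbove_lt_succAbove_iff.mp hab
      have hcb : Fin.castSucc b' < p := (Fin.succAbove_lt_iff_castSucc_lt p b').mp hbc
      have hb'p : (b' : ℕ) < (p : ℕ) := by
        have := Fin.lt_def.mp hcb
        rwa [Fin.coe_castSucc] at this
      exact absurd h1' (not_lt.mpr (le_of_lt (hdec a' b' hab' hb'p)))
    · obtain ⟨c', rfl⟩ := Fin.exists_succAbove_eq hc'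
      rw [ins_succAbove, ins_succAbove] at h1 h2
      apply hτ
      rw [containsInc3_iff]
      exact ⟨a', b', c', Fin.succAbove_lt_succAbove_iff.mp hab,
        Fin.succAbove_lt_succAbove_iff.mp hbc,
        Fin.castSucc_lt_castSucc_iff.mp h1, Fin.castSucc_lt_castSucc_iff.mp h2⟩

lemma decOn_ins_of_le {n : ℕ} (τ : Equiv.Perm (Fin n)) (p : Fin (n + 1)) {d : ℕ}
    (hd : d ≤ (p : ℕ)) : DecOn (ins τ p) d ↔ DecOn τ d := by
  have hdn : d ≤ n := le_trans hd (Nat.lt_succ_iff.mp p.isLt)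
  constructor
  · intro h i j hij hjd
    have hci : Fin.castSucc i < p := by
      rw [Fin.lt_def]
      have := Fin.lt_def.mp hij
      simpa using lt_of_lt_of_le (lt_trans this hjd) hd
    have hcj : Fin.castSucc j < p := by
      rw [Fin.lt_def]; simpa using lt_of_lt_of_le hjd hd
    have := h (Fin.castSucc i) (Fin.castSucc j) (Fin.castSucc_lt_castSucc_iff.mpr hij)
      (by simpa using hjd)
    rw [← Fin.succAbove_of_castSucc_lt _ _ hci, ← Fin.succAbove_of_castSucc_lt _ _ hcj,
      ins_succAbove, ins_succAbove] at this
    exact Fin.castSucc_lt_castSucc_iff.mp this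
  · intro h i j hij hjd
    have hij' := Fin.lt_def.mp hij
    have hin : (i : ℕ) < n := by omega
    have hjn : (j : ℕ) < n := by omega
    have hci : Fin.castSucc (⟨(i : ℕ), hin⟩ : Fin n) < p := by
      rw [Fin.lt_def, Fin.coe_castSucc]
      show (i : ℕ) < (p : ℕ)
      omega
    have hcj : Fin.castSucc (⟨(j : ℕ), hjn⟩ : Fin n) < p := by
      rw [Fin.lt_def, Fin.coe_castSucc]
      show (j : ℕ) < (p : ℕ)
      omega
    have hi : i = Fin.castSucc (⟨(i : ℕ), hin⟩ : Fin n) := by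
      apply Fin.ext
      rw [Fin.coe_castSucc]
    have hj : j = Fin.castSucc (⟨(j : ℕ), hjn⟩ : Fin n) := by
      apply Fin.ext
      rw [Fin.coe_castSucc]
    rw [hi, hj, ← Fin.succAbove_of_castSucc_lt _ _ hci, ← Fin.succAbove_of_castSucc_lt _ _ hcj,
      ins_succAbove, ins_succAbove]
    refine Fin.castSucc_lt_castSucc_iff.mpr (h ⟨(i : ℕ), hin⟩ ⟨(j : ℕ), hjn⟩ ?_ ?_)
    · rw [Fin.lt_def]
      exact hij'
    · exact hjd

lemma not_decOn_ins {n : ℕ} (τ : Equiv.Perm (Fin n)) (p : Fin (n + 1)) {d : ℕ}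
    (hp : 0 < (p : ℕ)) (hpd : (p : ℕ) < d) : ¬ DecOn (ins τ p) d := by
  intro h
  have hpn : (p : ℕ) ≤ n := Nat.lt_succ_iff.mp p.isLt
  have hq : Fin.castSucc (⟨(p : ℕ) - 1, by omega⟩ : Fin n) < p := by
    rw [Fin.lt_def, Fin.coe_castSucc]
    show (p : ℕ) - 1 < (p : ℕ)
    omega
  have := h (Fin.castSucc (⟨(p : ℕ) - 1, by omega⟩ : Fin n)) p hq hpd
  rw [← Fin.succAbove_of_castSucc_lt _ _ hq, ins_succAbove, ins_self] at this
  exact absurd (lt_trans this (Fin.castSucc_lt_last _)) (lt_irrefl _)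

lemma decOn_ins_zero {n : ℕ} (τ : Equiv.Perm (Fin n)) {d : ℕ} :
    DecOn (ins τ 0) (d + 1) ↔ DecOn τ d := by
  constructor
  · intro h i j hij hjd
    have := h (Fin.succ i) (Fin.succ j) (Fin.succ_lt_succ_iff.mpr hij)
      (by simp only [Fin.val_succ]; omega)
    rw [← Fin.succAbove_zero, ins_succAbove, ins_succAbove] at this
    exact Fin.castSucc_lt_castSucc_iff.mp this
  · intro h i j hij hjd
    have hij' := Fin.lt_def.mp hij
    have hjne : j ≠ 0 := by
      intro hj0; rw [hj0, Fin.val_zero] at hij'; omega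
    have hj0 : 0 < (j : ℕ) := by
      rcases Nat.eq_zero_or_pos (j : ℕ) with h0 | h0
      · exact absurd (Fin.ext h0 : j = 0) hjne
      · exact h0
    have hjn' : (j : ℕ) - 1 < n := by have := j.isLt; omega
    have hj : j = Fin.succ ⟨(j : ℕ) - 1, hjn'⟩ := by
      apply Fin.ext
      rw [Fin.val_succ]
      show (j : ℕ) = (j : ℕ) - 1 + 1
      omega
    rcases eq_or_ne i 0 with rfl | hine
    · rw [hj, ← Fin.succAbove_zero, ins_succAbove]
      have h00 : ins τ 0 0 = Fin.last n := ins_self τ 0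
      rw [h00]
      exact Fin.castSucc_lt_last _
    · have hi0 : 0 < (i : ℕ) := by
        rcases Nat.eq_zero_or_pos (i : ℕ) with h0 | h0
        · exact absurd (Fin.ext h0 : i = 0) hine
        · exact h0
      have hin' : (i : ℕ) - 1 < n := by have := i.isLt; omega
      have hi : i = Fin.succ ⟨(i : ℕ) - 1, hin'⟩ := by
        apply Fin.ext
        rw [Fin.val_succ]
        show (i : ℕ) = (i : ℕ) - 1 + 1
        omega
      rw [hi, hj, ← Fin.succAbove_zero, ins_succAbove, ins_succAbove]
      refine Fin.castSucc_lt_castSucc_iff.mpr (h ⟨(i : ℕ) - 1, hin'⟩ ⟨(j : ℕ) - 1, hjn'⟩ ?_ ?_)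
      · rw [Fin.lt_def]
        show (i : ℕ) - 1 < (j : ℕ) - 1
        omega
      · show (j : ℕ) - 1 < d
        omega

/-- Full characterization of the difference set under insertion. -/
lemma char_ins {n d : ℕ} (hd1 : 1 ≤ d) (p : Fin (n + 1)) (τ : Equiv.Perm (Fin n)) :
    (¬ ContainsInc (n + 1) 3 (ins τ p) ∧ DecOn (ins τ p) d ∧ ¬ DecOn (ins τ p) (d + 1)) ↔
      ((p = 0 ∧ ¬ ContainsInc n 3 τ ∧ DecOn τ (d - 1) ∧ ¬ DecOn τ d) ∨
        ((p : ℕ) = d ∧ ¬ ContainsInc n 3 τ ∧ DecOn τ d)) := by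
  obtain ⟨e, rfl⟩ : ∃ e, d = e + 1 := ⟨d - 1, by omega⟩
  rcases eq_or_ne p 0 with rfl | hp
  · constructor
    · rintro ⟨h1, h2, h3⟩
      left
      refine ⟨rfl, ((av_ins_iff τ 0).mp h1).1, ?_, ?_⟩
      · have := (decOn_ins_zero τ (d := e)).mp h2
        simpa using this
      · intro hc
        exact h3 ((decOn_ins_zero τ (d := e + 1)).mpr hc)
    · rintro (⟨-, hav, hdec, hnot⟩ | ⟨hval, -, -⟩)
      · refine ⟨(av_ins_iff τ 0).mpr ⟨hav, ?_⟩, ?_, ?_⟩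
        · have := decOn_zero τ
          simpa using this
        · exact (decOn_ins_zero τ (d := e)).mpr (by simpa using hdec)
        · intro hc
          exact hnot ((decOn_ins_zero τ (d := e + 1)).mp hc)
      · exfalso
        rw [Fin.val_zero] at hval
        omega
  · have hp0 : 0 < (p : ℕ) := by
      rcases Nat.eq_zero_or_pos (p : ℕ) with h0 | h0
      · exact absurd (Fin.ext h0 : p = 0) hp
      · exact h0
    constructor
    · rintro ⟨hav, hdec, hnot⟩
      rw [av_ins_iff] at hav
      obtain ⟨havτ, hdecp⟩ := hav
      have hdp : e + 1 ≤ (p : ℕ) := by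
        by_contra hlt
        exact (not_decOn_ins τ p hp0 (by omega)) hdec
      have hpd : (p : ℕ) < e + 2 := by
        by_contra hge
        exact hnot ((decOn_ins_of_le τ p (by omega)).mpr
          (decOn_mono (by omega) hdecp))
      right
      have hpe : (p : ℕ) = e + 1 := by omega
      exact ⟨hpe, havτ, by rw [← hpe]; exact hdecp⟩
    · rintro (⟨rfl, -, -, -⟩ | ⟨hval, hav, hdec⟩)
      · exact absurd rfl hp
      · refine ⟨(av_ins_iff τ p).mpr ⟨hav, by rw [hval]; exact hdec⟩, ?_, ?_⟩
        · exact (decOn_ins_of_le τ p (by omega)).mpr hdec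
        · exact not_decOn_ins τ p hp0 (by omega)

/-- Split a count by an extra predicate. -/
lemma card_split {α : Type*} [Finite α] (P Q : α → Prop) :
    Nat.card {x // P x} = Nat.card {x // P x ∧ Q x} + Nat.card {x // P x ∧ ¬ Q x} := by
  classical
  rw [← Nat.card_sum]
  apply Nat.card_congr
  exact (Equiv.sumCompl (fun x : {x // P x} => Q x.val)).symm.trans
    ((Equiv.subtypeSubtypeEquivSubtypeInter P Q).sumCongr
      (Equiv.subtypeSubtypeEquivSubtypeInter P (fun x => ¬ Q x)))

/-- The key recurrence. -/
lemma Fcnt_rec {n d : ℕ} (hd1 : 1 ≤ d) (hdn : d ≤ n) :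
    Fcnt (n + 1) d = Fcnt (n + 1) (d + 1) + Fcnt n (d - 1) := by
  classical
  have hsplit := card_split (α := Equiv.Perm (Fin (n + 1)))
    (fun σ => ¬ ContainsInc (n + 1) 3 σ ∧ DecOn σ d) (fun σ => DecOn σ (d + 1))
  rw [Fcnt, hsplit]
  congr 1
  · -- first piece is Fcnt (n+1) (d+1)
    rw [Fcnt]
    apply Nat.card_congr
    apply Equiv.subtypeEquivRight
    intro σ
    constructor
    · rintro ⟨⟨hav, -⟩, hdec⟩; exact ⟨hav, hdec⟩
    · rintro ⟨hav, hdec⟩; exact ⟨⟨hav, decOn_mono (by omega) hdec⟩, hdec⟩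
  · -- second piece: bijection via insertion
    rw [Fcnt]
    apply Nat.card_congr
    have e1 : {x : Fin (n + 1) × Equiv.Perm (Fin n) //
        (¬ ContainsInc (n + 1) 3 (insEquiv n x) ∧ DecOn (insEquiv n x) d) ∧
          ¬ DecOn (insEquiv n x) (d + 1)} ≃
        {σ : Equiv.Perm (Fin (n + 1)) //
          (¬ ContainsInc (n + 1) 3 σ ∧ DecOn σ d) ∧ ¬ DecOn σ (d + 1)} :=
      (insEquiv n).subtypeEquiv (fun x => Iff.rfl)
    refine (e1.symm.trans ?_)
    refine Equiv.ofBijective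
      (fun x => ⟨x.val.2, ?_, ?_⟩) ⟨?_, ?_⟩
    · -- avoidance
      have hx := x.property
      rw [show (insEquiv n x.val) = ins x.val.2 x.val.1 from rfl] at hx
      have := (char_ins hd1 x.val.1 x.val.2).mp ⟨hx.1.1, hx.1.2, hx.2⟩
      rcases this with ⟨-, h, -, -⟩ | ⟨-, h, -⟩ <;> exact h
    · -- DecOn (d-1)
      have hx := x.property
      rw [show (insEquiv n x.val) = ins x.val.2 x.val.1 from rfl] at hx
      have := (char_ins hd1 x.val.1 x.val.2).mp ⟨hx.1.1, hx.1.2, hx.2⟩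
      rcases this with ⟨-, -, h, -⟩ | ⟨-, -, h⟩
      · exact h
      · exact decOn_mono (by omega) h
    · -- injective
      rintro ⟨⟨p, τ⟩, hx⟩ ⟨⟨p', τ'⟩, hy⟩ hxy
      simp only [Subtype.mk_eq_mk] at hxy ⊢
      obtain rfl : τ = τ' := hxy
      rw [show (insEquiv n (p, τ)) = ins τ p from rfl] at hx
      rw [show (insEquiv n (p', τ)) = ins τ p' from rfl] at hy
      have hx' := (char_ins hd1 p τ).mp ⟨hx.1.1, hx.1.2, hx.2⟩
      have hy' := (char_ins hd1 p' τ).mp ⟨hy.1.1, hy.1.2, hy.2⟩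
      have : p = p' := by
        rcases hx' with ⟨rfl, -, -, hnd⟩ | ⟨hv, -, hd'⟩ <;>
          rcases hy' with ⟨rfl, -, -, hnd'⟩ | ⟨hv', -, hd''⟩
        · rfl
        · exact absurd hd'' hnd
        · exact absurd hd' hnd'
        · exact Fin.ext (hv.trans hv'.symm)
      rw [this]
    · -- surjective
      rintro ⟨τ, hav, hdec⟩
      by_cases hD : DecOn τ d
      · refine ⟨⟨⟨(⟨d, by omega⟩ : Fin (n + 1)), τ⟩, ?_⟩, rfl⟩
        have := (char_ins hd1 (⟨d, by omega⟩ : Fin (n + 1)) τ).mpr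
          (Or.inr ⟨rfl, hav, hD⟩)
        exact ⟨⟨this.1, this.2.1⟩, this.2.2⟩
      · refine ⟨⟨⟨(0 : Fin (n + 1)), τ⟩, ?_⟩, rfl⟩
        have := (char_ins hd1 (0 : Fin (n + 1)) τ).mpr
          (Or.inl ⟨rfl, hav, hdec, hD⟩)
        exact ⟨⟨this.1, this.2.1⟩, this.2.2⟩

lemma perm_strictMono_eq {m : ℕ} (π : Equiv.Perm (Fin m)) (h : StrictMono ⇑π) :
    ∀ i, π i = i := by
  have key : ∀ (ρ : Equiv.Perm (Fin m)), StrictMono ⇑ρ → ∀ i : Fin m, (i : ℕ) ≤ (ρ i : ℕ) := by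
    intro ρ hρ i
    obtain ⟨k, hk⟩ : ∃ k, (i : ℕ) = k := ⟨i, rfl⟩
    induction k generalizing i with
    | zero => omega
    | succ k IH =>
      have hk' : k < m := by have := i.isLt; omega
      have hlt : (⟨k, hk'⟩ : Fin m) < i := by rw [Fin.lt_def]; simp; omega
      have h1 := IH ⟨k, hk'⟩ rfl
      have h2 := hρ hlt
      rw [Fin.lt_def] at h2
      simp at h1
      omega
  have hsymm : StrictMono ⇑π.symm := by
    intro a b hab
    rcases lt_trichotomy (π.symm a) (π.symm b) with h1 | h1 | h1
    · exact h1
    · exact absurd (congrArg π h1) (by simp [Equiv.apply_symm_apply]; exact hab.ne)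
    · have := h h1
      simp only [Equiv.apply_symm_apply] at this
      exact absurd hab (not_lt.mpr this.le)
  intro i
  have h1 := key π h i
  have h2 := key π.symm hsymm (π i)
  rw [Equiv.symm_apply_apply] at h2
  exact Fin.ext (by omega)

lemma Fcnt_diag (n : ℕ) : Fcnt n n = 1 := by
  rw [Fcnt, Nat.card_eq_one_iff_unique]
  constructor
  · constructor
    rintro ⟨σ, -, hσ⟩ ⟨σ', -, hσ'⟩
    have huniq : ∀ (ρ : Equiv.Perm (Fin n)), DecOn ρ n → ∀ i, ρ i = Fin.rev i := by
      intro ρ hρ i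
      have hsm : StrictMono ⇑(ρ.trans Fin.revPerm) := by
        intro a b hab
        simp only [Equiv.trans_apply]
        have := hρ a b hab (b.isLt)
        exact (Fin.rev_lt_rev).mpr this
      have := perm_strictMono_eq _ hsm i
      simp only [Equiv.trans_apply] at this
      have := congrArg Fin.rev this
      rwa [Fin.revPerm_apply, Fin.rev_rev] at this
    apply Subtype.ext
    apply Equiv.ext
    intro i
    rw [huniq σ hσ i, huniq σ' hσ' i]
  · refine ⟨Fin.revPerm, ?_, ?_⟩
    · rw [containsInc3_iff]
      rintro ⟨a, b, c, hab, -, h1, -⟩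
      simp only [Fin.revPerm_apply] at h1
      exact absurd (Fin.rev_lt_rev.mp h1) (not_lt.mpr hab.le)
    · intro i j hij _
      simp only [Fin.revPerm_apply]
      exact Fin.rev_lt_rev.mpr hij

lemma Fcnt_zero (d : ℕ) : Fcnt 0 d = 1 := by
  rw [Fcnt, Nat.card_eq_one_iff_unique]
  constructor
  · constructor
    rintro ⟨σ, -⟩ ⟨σ', -⟩
    apply Subtype.ext
    apply Equiv.ext
    intro i
    exact i.elim0
  · refine ⟨Equiv.refl _, ?_, ?_⟩
    · rintro ⟨s, -, -⟩
      exact (s 0).elim0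
    · intro i j _ _
      exact i.elim0

lemma Fcnt_zero_one (n : ℕ) : Fcnt n 0 = Fcnt n 1 := by
  rw [Fcnt, Fcnt]
  apply Nat.card_congr
  apply Equiv.subtypeEquivRight
  intro σ
  simp only [and_congr_right_iff]
  intro _
  exact ⟨fun _ => decOn_one σ, fun _ => decOn_zero σ⟩

lemma G_eq_Fcnt (n : ℕ) : G 3 n = Fcnt n 0 := by
  rw [G, Fcnt]
  apply Nat.card_congr
  apply Equiv.subtypeEquivRight
  intro σ
  exact ⟨fun h => ⟨h, decOn_zero σ⟩, fun h => h.1⟩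

/-- Closed form via ballot numbers. -/
lemma Fcnt_closed : ∀ n d m : ℕ, n = d + m →
    (n + 1) * Fcnt n d = (d + 1) * (d + 2 * m).choose m := by
  intro n
  induction n with
  | zero =>
    intro d m h
    obtain rfl : d = 0 := by omega
    obtain rfl : m = 0 := by omega
    simp [Fcnt_zero]
  | succ n IH =>
    have inner : ∀ m d, n + 1 = d + m →
        (n + 2) * Fcnt (n + 1) d = (d + 1) * (d + 2 * m).choose m := by
      intro m
      induction m with
      | zero =>
        intro d h
        obtain rfl : d = n + 1 := by omega
        rw [Fcnt_diag]
        simp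
      | succ m IHm =>
        intro d h
        rcases Nat.eq_zero_or_pos d with rfl | hd
        · -- d = 0, so n = m
          obtain rfl : n = m := by omega
          have h1 := IHm 1 (by omega)
          rw [Fcnt_zero_one]
          rw [h1]
          -- goal: 2 * (1 + 2*n).choose n = 1 * (0 + 2*(n+1)).choose (n+1)
          have hp : (0 + 2 * (n + 1)).choose (n + 1) = 2 * (1 + 2 * n).choose n := by
            have e1 : 0 + 2 * (n + 1) = (2 * n + 1) + 1 := by ring
            rw [e1, Nat.choose_succ_succ,
              Nat.choose_symm_half]
            have e2 : 1 + 2 * n = 2 * n + 1 := by ring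
            rw [e2]
            ring
          rw [hp]
          ring
        · obtain ⟨e, rfl⟩ : ∃ e, d = e + 1 := ⟨d - 1, by omega⟩
          have hn : n = e + m + 1 := by omega
          have hrec : Fcnt (n + 1) (e + 1) = Fcnt (n + 1) (e + 2) + Fcnt n e := by
            have := Fcnt_rec (n := n) (d := e + 1) (by omega) (by omega)
            simpa using this
          have hA := IHm (e + 2) (by omega)
          have hB := IH e (m + 1) (by omega)
          -- abbreviations
          set X := Fcnt (n + 1) (e + 1) with hX
          set A := Fcnt (n + 1) (e + 2) with hA'
          set Bv := Fcnt n e with hB'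
          -- hA : (n+2) * A = (e+3) * ((e+2) + 2*m).choose m
          -- hB : (n+1) * Bv = (e+1) * (e + 2*(m+1)).choose (m+1)
          set a := (e + 2 * m + 2).choose m with ha
          set b := (e + 2 * m + 2).choose (m + 1) with hb
          have hAa : (n + 2) * A = (e + 3) * a := by
            have : (e + 2) + 2 * m = e + 2 * m + 2 := by ring
            rw [hA, this]
          have hBb : (n + 1) * Bv = (e + 1) * b := by
            have : e + 2 * (m + 1) = e + 2 * m + 2 := by ring
            rw [hB, this]
          have hkey : b * (m + 1) = a * (e + m + 2) := by
            have := Nat.choose_succ_right_eq (e + 2 * m + 2) m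
            have he : e + 2 * m + 2 - m = e + m + 2 := by omega
            rw [he] at this
            exact this
          have hpascal : (e + 1 + 2 * (m + 1)).choose (m + 1) = a + b := by
            have e1 : e + 1 + 2 * (m + 1) = (e + 2 * m + 2) + 1 := by ring
            rw [e1, Nat.choose_succ_succ]
          rw [hpascal]
          -- goal : (n + 2) * X = (e + 2) * (a + b)
          have hmul : (n + 1) * ((n + 2) * X) = (n + 1) * ((e + 2) * (a + b)) := by
            have hX' : X = A + Bv := hrec
            rw [hX']
            have expand : (n + 1) * ((n + 2) * (A + Bv)) =
                (n + 1) * ((n + 2) * A) + (n + 2) * ((n + 1) * Bv) := by ring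
            rw [expand, hAa, hBb, hn]
            -- pure identity in e, m, a, b with hkey
            nlinarith [hkey]
          exact Nat.eq_of_mul_eq_mul_left (by omega) hmul
    exact fun d m h => inner m d h

/-- `G_3(n)` is the `n`-th Catalan number `C_n = (1/(n+1))·C(2n,n)`. -/
theorem stmt5 (n : ℕ) :
    G 3 n = catalan n ∧ (n + 1) * catalan n = (2 * n).choose n := by
  have h2 : (n + 1) * catalan n = (2 * n).choose n := by
    rw [succ_mul_catalan_eq_centralBinom, Nat.centralBinom]
  refine ⟨?_, h2⟩
  have h1 : (n + 1) * G 3 n = (n + 1) * catalan n := by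
    rw [h2, G_eq_Fcnt]
    have := Fcnt_closed n 0 n (by omega)
    simpa using this
  exact Nat.eq_of_mul_eq_mul_left (by omega) h1
end

section
/- G_d(d+1) = (d+1)! - d^2 - 1 for all d ≥ 1. -/
/-!
A permutation of `Fin (n + 1)` with an increasing subsequence of length `n` is in increasing
order off a single position: it is `movePerm p v`, which puts the value `v` at position `p`
and the other values in increasing order at the other positions. Of the `(n + 1)²` pairs
`(p, v)`, the `n + 1` diagonal pairs all give the identity and the pairs `(j, j + 1)` and
`(j + 1, j)` give the same adjacent transposition; removing the `2n + 1` pairs `(p, p)` and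
`(j, j + 1)` leaves `n²` pairs giving distinct non-identity permutations. Hence `n² + 1`
permutations contain such a subsequence, and the rest avoid it.
-/

open Equiv Function

section

variable {n : ℕ}

def movePerm (p v : Fin (n + 1)) : Perm (Fin (n + 1)) :=
  (finSuccEquiv' p).trans (finSuccEquiv' v).symm

@[simp] lemma movePerm_apply_self (p v : Fin (n + 1)) : movePerm p v p = v := by
  simp [movePerm, finSuccEquiv'_symm_none]

@[simp] lemma movePerm_apply_succAbove (p v : Fin (n + 1)) (j : Fin n) :
    movePerm p v (p.succAbove j) = v.succAbove j := by
  simp [movePerm, finSuccEquiv'_symm_some]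

@[simp] lemma movePerm_self (p : Fin (n + 1)) : movePerm p p = 1 := by
  ext x; simp [movePerm]

lemma movePerm_symm (p v : Fin (n + 1)) : (movePerm p v).symm = movePerm v p := rfl

lemma movePerm_castSucc_succ (j : Fin n) :
    movePerm j.castSucc j.succ = swap j.castSucc j.succ := by
  ext x
  rcases Fin.eq_self_or_eq_succAbove j.castSucc x with rfl | ⟨k, rfl⟩
  · simp
  rcases lt_trichotomy k j with hk | rfl | hk
  · rw [movePerm_apply_succAbove, Fin.succAbove_castSucc_of_lt _ _ hk,
      Fin.succAbove_succ_of_le _ _ hk.le, swap_apply_of_ne_of_ne] <;>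
      (rw [Fin.lt_def] at hk; simp [Fin.ext_iff]; omega)
  · rw [movePerm_apply_succAbove, Fin.succAbove_castSucc_self, Fin.succAbove_succ_self,
      swap_apply_right]
  · rw [movePerm_apply_succAbove, Fin.succAbove_castSucc_of_le _ _ hk.le,
      Fin.succAbove_succ_of_lt _ _ hk, swap_apply_of_ne_of_ne] <;>
      (rw [Fin.lt_def] at hk; simp [Fin.ext_iff]; omega)

lemma movePerm_succ_castSucc (j : Fin n) :
    movePerm j.succ j.castSucc = movePerm j.castSucc j.succ := by
  rw [← movePerm_symm, movePerm_castSucc_succ, symm_swap]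

lemma StrictMono.exists_eq_succAbove {s : Fin n → Fin (n + 1)} (hs : StrictMono s) :
    ∃ p : Fin (n + 1), s = p.succAbove := by
  obtain ⟨p, hp⟩ : ∃ p, p ∉ Set.range s := by
    by_contra! h
    have := Fintype.card_le_of_surjective s fun x => h x
    simp at this
  refine ⟨p, ?_⟩
  have := Finset.orderEmbOfFin_unique (s := {p}ᶜ) (by simp [Finset.card_compl])
    (fun x => by simpa using fun h => hp ⟨x, h⟩) hs
  simpa [Fin.succAboveOrderEmb] using this

lemma eq_movePerm_of_strictMono_comp_succAbove {σ : Perm (Fin (n + 1))} {p : Fin (n + 1)}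
    (hσ : StrictMono (σ ∘ p.succAbove)) : σ = movePerm p (σ p) := by
  obtain ⟨v, hv⟩ := hσ.exists_eq_succAbove
  have hv' : σ p = v := by
    by_contra hne
    obtain ⟨k, hk⟩ := Fin.exists_succAbove_eq hne
    rw [← hv, comp_apply, σ.apply_eq_iff_eq] at hk
    exact Fin.succAbove_ne p k hk
  ext x
  rcases Fin.eq_self_or_eq_succAbove p x with rfl | ⟨k, rfl⟩
  · simp
  · simp [hv', ← hv]

lemma containsInc_succ_iff (σ : Perm (Fin (n + 1))) :
    ContainsInc (n + 1) n σ ↔ ∃ p v, σ = movePerm p v := by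
  constructor
  · rintro ⟨s, hs, hσs⟩
    obtain ⟨p, rfl⟩ := hs.exists_eq_succAbove
    exact ⟨p, _, eq_movePerm_of_strictMono_comp_succAbove hσs⟩
  · rintro ⟨p, v, rfl⟩
    exact ⟨p.succAbove, Fin.strictMono_succAbove p, by simpa using Fin.strictMono_succAbove v⟩

def nearDiag : Fin (n + 1) ⊕ Fin n → Fin (n + 1) × Fin (n + 1) :=
  Sum.elim (fun p => (p, p)) (fun j => (j.castSucc, j.succ))

lemma nearDiag_injective : Injective (nearDiag (n := n)) :=
  Injective.sumElim (fun _ _ h => congrArg Prod.fst h)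
    (fun _ _ h => Fin.castSucc_injective _ (congrArg Prod.fst h))
    (fun _ j h => (Fin.castSucc_lt_succ (i := j)).ne
      ((congrArg Prod.fst h).symm.trans (congrArg Prod.snd h)))

lemma card_compl_range_nearDiag : Nat.card {x // x ∉ Set.range (nearDiag (n := n))} = n ^ 2 := by
  rw [Nat.card_eq_fintype_card, Fintype.card_subtype_compl,
    Set.card_range_of_injective nearDiag_injective]
  simp only [Fintype.card_prod, Fintype.card_sum, Fintype.card_fin]
  refine Nat.sub_eq_of_eq_add ?_
  ring

lemma succ_castSucc_notMem_range_nearDiag (j : Fin n) :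
    (j.succ, j.castSucc) ∉ Set.range nearDiag := by
  rintro ⟨q | k, h⟩ <;> simp [nearDiag, Prod.ext_iff, Fin.ext_iff] at h <;> omega

lemma mem_range_nearDiag_of_movePerm_eq {p v p' v' : Fin (n + 1)}
    (h : movePerm p v = movePerm p' v') (hp : p < p') : (p, v) ∈ Set.range nearDiag := by
  obtain ⟨j, rfl⟩ := Fin.exists_castSucc_eq.mpr (Fin.ne_last_of_lt hp)
  have hv : v = v'.succAbove j := by
    rw [← movePerm_apply_self j.castSucc v, h, ← Fin.succAbove_of_castSucc_lt _ _ hp,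
      movePerm_apply_succAbove]
  unfold Fin.succAbove at hv
  split_ifs at hv <;> subst hv
  · exact ⟨Sum.inl _, rfl⟩
  · exact ⟨Sum.inr j, rfl⟩

lemma movePerm_injOn :
    Set.InjOn (fun x : Fin (n + 1) × Fin (n + 1) => movePerm x.1 x.2) (Set.range nearDiag)ᶜ := by
  rintro ⟨p, v⟩ hpv ⟨p', v'⟩ hpv' h
  obtain rfl : p = p' := by
    rcases lt_trichotomy p p' with hp | rfl | hp
    · exact (hpv (mem_range_nearDiag_of_movePerm_eq h hp)).elim
    · rfl
    · exact (hpv' (mem_range_nearDiag_of_movePerm_eq h.symm hp)).elim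
  simpa using congrArg (· p) h

def toContainsInc : Option {x // x ∉ Set.range (nearDiag (n := n))} →
    {σ : Perm (Fin (n + 1)) // ContainsInc (n + 1) n σ}
  | none => ⟨1, (containsInc_succ_iff 1).mpr ⟨0, 0, (movePerm_self 0).symm⟩⟩
  | some x => ⟨movePerm x.1.1 x.1.2, (containsInc_succ_iff _).mpr ⟨_, _, rfl⟩⟩

lemma movePerm_ne_one {p v : Fin (n + 1)} (hpv : (p, v) ∉ Set.range nearDiag) :
    movePerm p v ≠ 1 := by
  intro h
  have hvp : v = p := by simpa using congrArg (· p) h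
  exact hpv ⟨Sum.inl p, by simp [nearDiag, hvp]⟩

lemma toContainsInc_bijective : Bijective (toContainsInc (n := n)) := by
  constructor
  · rintro (_ | ⟨x, hx⟩) (_ | ⟨y, hy⟩) h <;>
      simp only [toContainsInc, Subtype.mk.injEq] at h
    · rfl
    · exact (movePerm_ne_one hy h.symm).elim
    · exact (movePerm_ne_one hx h).elim
    · exact congrArg _ (Subtype.ext (movePerm_injOn hx hy h))
  · rintro ⟨σ, hσ⟩
    obtain ⟨p, v, rfl⟩ := (containsInc_succ_iff σ).mp hσ
    by_cases hpv : (p, v) ∈ Set.range nearDiag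
    · obtain ⟨q | j, hq⟩ := hpv <;> simp only [nearDiag, Sum.elim_inl, Sum.elim_inr,
        Prod.mk.injEq] at hq <;> obtain ⟨rfl, rfl⟩ := hq
      · exact ⟨none, by simp [toContainsInc]⟩
      · exact ⟨some ⟨_, succ_castSucc_notMem_range_nearDiag j⟩, by
          simp [toContainsInc, movePerm_succ_castSucc]⟩
    · exact ⟨some ⟨_, hpv⟩, rfl⟩

lemma card_containsInc_succ : Nat.card {σ : Perm (Fin (n + 1)) // ContainsInc (n + 1) n σ} =
    n ^ 2 + 1 := by
  rw [← Nat.card_congr (Equiv.ofBijective _ toContainsInc_bijective), Finite.card_option,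
    card_compl_range_nearDiag]

end

theorem stmt15_general (d : ℕ) : G d (d + 1) = Nat.factorial (d + 1) - d ^ 2 - 1 := by
  classical
  rw [G, Nat.card_eq_fintype_card, Fintype.card_subtype_compl, Fintype.card_perm,
    Fintype.card_fin, ← Nat.card_eq_fintype_card, card_containsInc_succ, Nat.sub_sub]

/-- `G_d(d+1) = (d+1)! - d² - 1` for all `d ≥ 1`. -/
theorem stmt15 (d : ℕ) (hd : 1 ≤ d) : G d (d + 1) = Nat.factorial (d + 1) - d ^ 2 - 1 :=
  stmt15_general d
end
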